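/- arXiv:1612.09233 — 4 statements merged into one kernel-verified Lean document; each statement's English description precedes it below -/
import Mathlib

section
/- Let 0 < β < d and let X = (x_1,…,x_N) ∈ (ℝ^d)^N. Suppose there is a constant C' > 0 such that (1/N) Σ_{i=1, i≠j}^N |x_i − x_j|^{−β} ≤ C' for every j ∈ {1,…,N}. Then X is an empirical p-Morrey measure with p = d/(d−β) and [X]_{M_p^N} ≤ C'. -/
open MeasureTheory Filter Topology
open scoped ENNReal NNReal

/-- The nonnegative part of an extended real, as a value in `ℝ≥0∞`. -/
noncomputable def erealToENNReal (a : EReal) : ℝ≥0∞ :=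
  if a = ⊤ then ⊤ else ENNReal.ofReal a.toReal

noncomputable section

/-- Euclidean space ℝ^d. -/
abbrev Euc (d : ℕ) : Type := EuclideanSpace ℝ (Fin d)

/-- Signed integral of an `EReal`-valued function (positive part minus negative part). -/
noncomputable def eintegral {α : Type*} [MeasurableSpace α] (μ : Measure α) (f : α → EReal) :
    EReal :=
  ((∫⁻ x, erealToENNReal (f x) ∂μ : ℝ≥0∞) : EReal) -
    ((∫⁻ x, erealToENNReal (-f x) ∂μ : ℝ≥0∞) : EReal)

/-- Continuum interaction energy `E(ρ) = (1/2) ∬ W(x−y) dρ(x) dρ(y)`. -/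
noncomputable def contEnergy {d : ℕ} (W : Euc d → EReal) (ρ : Measure (Euc d)) : EReal :=
  (((1 : ℝ) / 2 : ℝ) : EReal) * eintegral (ρ.prod ρ) fun p => W (p.1 - p.2)

/-- Discrete interaction energy `E_N(X) = (1/(2N²)) Σ_{i≠j} W(x_i − x_j)`. -/
noncomputable def discEnergy {d : ℕ} (W : Euc d → EReal) (N : ℕ) (X : Fin N → Euc d) : EReal :=
  (((1 : ℝ) / (2 * (N : ℝ) ^ 2) : ℝ) : EReal) *
    ∑ i : Fin N, ∑ j ∈ Finset.univ.erase i, W (X i - X j)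

/-- `P_i(X) = (1/N) Σ_{j≠i} W(x_i − x_j)`, the potential felt by particle `i`. -/
noncomputable def particlePotential {d : ℕ} (W : Euc d → EReal) (N : ℕ) (X : Fin N → Euc d)
    (i : Fin N) : EReal :=
  (((N : ℝ)⁻¹ : ℝ) : EReal) * ∑ j ∈ Finset.univ.erase i, W (X i - X j)

/-- Empirical measure `μ_X = (1/N) Σ δ_{x_i}`. -/
noncomputable def empMeasure {d N : ℕ} (X : Fin N → Euc d) : Measure (Euc d) :=
  (N : ℝ≥0∞)⁻¹ • ∑ i : Fin N, Measure.dirac (X i)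

/-- `X` is a global minimiser of the discrete energy `E_N`. -/
def IsDiscMinimiser {d : ℕ} (W : Euc d → EReal) (N : ℕ) (X : Fin N → Euc d) : Prop :=
  ∀ Y : Fin N → Euc d, discEnergy W N X ≤ discEnergy W N Y

/-- `ρ` is a Borel probability measure minimising the continuum energy over all
Borel probability measures. -/
def IsContMinimiser {d : ℕ} (W : Euc d → EReal) (ρ : Measure (Euc d)) : Prop :=
  IsProbabilityMeasure ρ ∧
    ∀ ν : Measure (Euc d), IsProbabilityMeasure ν → contEnergy W ρ ≤ contEnergy W ν

/-- Narrow convergence of a sequence of measures, in duality with bounded continuous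
functions. -/
def NarrowTendsto {d : ℕ} (μ : ℕ → Measure (Euc d)) (ρ : Measure (Euc d)) : Prop :=
  ∀ f : BoundedContinuousFunction (Euc d) ℝ,
    Tendsto (fun N => ∫ x, f x ∂μ N) atTop (nhds (∫ x, f x ∂ρ))

/-- Support of a measure. -/
def measSupport {d : ℕ} (ρ : Measure (Euc d)) : Set (Euc d) :=
  {x | ∀ r : ℝ, 0 < r → 0 < ρ (Metric.ball x r)}

/-- Average of `W` over the ball of radius `ε` centred at `x`. -/
noncomputable def ballAvg {d : ℕ} (W : Euc d → EReal) (x : Euc d) (ε : ℝ) : EReal :=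
  (((volume (Metric.ball x ε)).toReal⁻¹ : ℝ) : EReal) *
    eintegral (volume.restrict (Metric.ball x ε)) W

/-- Generalised Laplacian `Δ⁰W(x) = liminf_{ε→0⁺} (2(d+2)/ε²)(⨍_{B_ε(x)} W − W(x))`. -/
noncomputable def genLap {d : ℕ} (W : Euc d → EReal) (x : Euc d) : EReal :=
  Filter.liminf
    (fun ε : ℝ => (((2 * ((d : ℝ) + 2) / ε ^ 2) : ℝ) : EReal) * (ballAvg W x ε - W x))
    (nhdsWithin (0 : ℝ) (Set.Ioi 0))

/-- Local integrability of an `EReal`-valued function. -/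
def ERealLocInt {d : ℕ} (W : Euc d → EReal) : Prop :=
  ∀ K : Set (Euc d), IsCompact K →
    (∫⁻ x in K, erealToENNReal (W x)) < ⊤ ∧ (∫⁻ x in K, erealToENNReal (-W x)) < ⊤

/-- `W` is β-repulsive at the origin. -/
def BetaRepulsive {d : ℕ} (W : Euc d → EReal) (β : ℝ) : Prop :=
  ERealLocInt W ∧
    ∃ δ : ℝ, 0 < δ ∧ ∃ C : ℝ, 0 < C ∧
      (∀ x : Euc d, 0 < ‖x‖ → ‖x‖ < δ → ((C * ‖x‖ ^ (-β) : ℝ) : EReal) ≤ -genLap W x) ∧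
      genLap W (0 : Euc d) = ⊥

/-- Hypothesis (H1): `W` is lower semicontinuous, bounded below by `Wmin` and locally
integrable. -/
def Hyp1 {d : ℕ} (W : Euc d → EReal) (Wmin : ℝ) : Prop :=
  LowerSemicontinuous W ∧ (∀ x, (Wmin : EReal) ≤ W x) ∧ ERealLocInt W

/-- Hypothesis (H2): `W(x) → Winf` as `|x| → ∞`, `W` is symmetric, and `W` is radially
strictly increasing outside the ball of radius `RW > 0`. -/
def Hyp2 {d : ℕ} (W : Euc d → EReal) (Winf : EReal) (RW : ℝ) : Prop :=
  Tendsto W (cocompact (Euc d)) (nhds Winf) ∧ (∀ x, W (-x) = W x) ∧ 0 < RW ∧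
    ∀ e : Euc d, ‖e‖ = 1 → ∀ r s : ℝ, RW ≤ r → r < s → W (r • e) < W (s • e)

/-- Hypothesis (H3a): `W` is bounded from above and upper semicontinuous. -/
def Hyp3a {d : ℕ} (W : Euc d → EReal) : Prop :=
  (∃ C : ℝ, ∀ x, W x ≤ (C : EReal)) ∧ UpperSemicontinuous W

/-- Hypothesis (H3b): `W` is β-repulsive with `2 < β < d`, is `C¹` away from the origin,
and satisfies `Δ⁰W ≤ C_W`, `W(x) ≤ C_W|x|^{2−β}` and `|∇W(x)| ≤ C_W|x|^{1−β}` for `|x| ≤ 1`. -/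
def Hyp3b {d : ℕ} (W : Euc d → EReal) (β C_W : ℝ) : Prop :=
  2 < β ∧ β < d ∧ 0 < C_W ∧ BetaRepulsive W β ∧
    (∃ g : Euc d → ℝ, (∀ x : Euc d, x ≠ 0 → W x = (g x : EReal)) ∧
      ContDiffOn ℝ 1 g {(0 : Euc d)}ᶜ ∧
      ∀ x : Euc d, x ≠ 0 → ‖x‖ ≤ 1 → ‖fderiv ℝ g x‖ ≤ C_W * ‖x‖ ^ ((1 : ℝ) - β)) ∧
    (∀ x, genLap W x ≤ (C_W : EReal)) ∧
    ∀ x : Euc d, x ≠ 0 → ‖x‖ ≤ 1 → W x ≤ ((C_W * ‖x‖ ^ ((2 : ℝ) - β) : ℝ) : EReal)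

/-- `W` is unstable: some probability measure has energy `< Winf/2`. -/
def Unstable {d : ℕ} (W : Euc d → EReal) (Winf : EReal) : Prop :=
  ∃ ρ : Measure (Euc d), IsProbabilityMeasure ρ ∧
    contEnergy W ρ < (((1 : ℝ) / 2 : ℝ) : EReal) * Winf

/-- `W` is strictly stable: every probability measure has energy `> Winf/2`. -/
def StrictlyStable {d : ℕ} (W : Euc d → EReal) (Winf : EReal) : Prop :=
  ∀ ρ : Measure (Euc d), IsProbabilityMeasure ρ →
    (((1 : ℝ) / 2 : ℝ) : EReal) * Winf < contEnergy W ρ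

/-- `W` is discretely unstable. -/
def DiscUnstable {d : ℕ} (W : Euc d → EReal) (Winf : EReal) : Prop :=
  ∃ s : ℝ, 0 < s ∧ ∃ Nbar : ℕ, 2 ≤ Nbar ∧ ∀ N : ℕ, Nbar < N →
    ∃ X : Fin N → Euc d,
      discEnergy W N X < (((1 : ℝ) / 2 : ℝ) : EReal) * Winf - (s : EReal)

/-- `W` is H-unstable. -/
def HUnstable {d : ℕ} (W : Euc d → EReal) (Winf : EReal) : Prop :=
  ∀ B : ℝ, ∃ N : ℕ, 2 ≤ N ∧ ∃ X : Fin N → Euc d,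
    discEnergy W N X < (((1 : ℝ) / 2 : ℝ) : EReal) * Winf - ((B / (2 * (N : ℝ)) : ℝ) : EReal)

/-- The Morrey exponent `d/q`, where `q` is the Hölder dual of `p`. -/
def morreyExp (d : ℕ) (p : ℝ≥0∞) : ℝ := (d : ℝ) * (1 - (p⁻¹).toReal)

end
/-! Since `t ↦ t ^ (-β)` is decreasing, each of the other particles in `B_r(x_i)` contributes at
least `r ^ (-β)` to the Riesz potential felt by particle `i`. Hence the potential bound `C'` allows at
most `N C' r ^ β` of them, and `x_i` itself accounts for the extra `1/N`. -/

open Finset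
open scoped Classical

lemma empMeasure_le_inv_mul_card_erase_add_inv {d N : ℕ} (X : Fin N → Euc d)
    (s : Set (Euc d)) (i : Fin N) :
    empMeasure X s ≤ (N : ℝ≥0∞)⁻¹ * #{j ∈ univ.erase i | X j ∈ s} + (N : ℝ≥0∞)⁻¹ := by
  have hcard : #{j | X j ∈ s} ≤ #{j ∈ univ.erase i | X j ∈ s} + 1 := by
    rw [filter_erase]
    have := pred_card_le_card_erase (s := {j | X j ∈ s}) (a := i)
    omega
  calc empMeasure X s = (N : ℝ≥0∞)⁻¹ * #{j | X j ∈ s} := by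
        simp [empMeasure, Measure.finsetSum_apply, Measure.dirac_apply, Set.indicator_apply]
    _ ≤ (N : ℝ≥0∞)⁻¹ * (#{j ∈ univ.erase i | X j ∈ s} + 1) := by gcongr; exact_mod_cast hcard
    _ = _ := by rw [mul_add, mul_one]

lemma card_filter_mem_ball_mul_rpow_neg_le {ι E : Type*} [SeminormedAddCommGroup E]
    (s : Finset ι) (x : ι → E) (c : E) {r β : ℝ} (hβ : 0 ≤ β) :
    #{j ∈ s | x j ∈ Metric.ball c r} * ENNReal.ofReal r ^ (-β) ≤
      ∑ j ∈ s, (‖x j - c‖₊ : ℝ≥0∞) ^ (-β) := by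
  have hclose : ∀ j ∈ ({j ∈ s | x j ∈ Metric.ball c r} : Finset ι),
      ENNReal.ofReal r ^ (-β) ≤ (‖x j - c‖₊ : ℝ≥0∞) ^ (-β) := by
    intro j hj
    have hlt : ‖x j - c‖ < r := by simpa [dist_eq_norm] using (mem_filter.mp hj).2
    have hle : (‖x j - c‖₊ : ℝ≥0∞) ≤ ENNReal.ofReal r := by
      rw [← enorm_eq_nnnorm, ← ofReal_norm]
      exact ENNReal.ofReal_le_ofReal hlt.le
    simpa only [ENNReal.rpow_neg] using ENNReal.inv_le_inv.mpr (ENNReal.rpow_le_rpow hle hβ)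
  calc #{j ∈ s | x j ∈ Metric.ball c r} * ENNReal.ofReal r ^ (-β)
      = #{j ∈ s | x j ∈ Metric.ball c r} • ENNReal.ofReal r ^ (-β) := (nsmul_eq_mul _ _).symm
    _ ≤ ∑ j ∈ s with x j ∈ Metric.ball c r, (‖x j - c‖₊ : ℝ≥0∞) ^ (-β) :=
        card_nsmul_le_sum _ _ _ hclose
    _ ≤ ∑ j ∈ s, (‖x j - c‖₊ : ℝ≥0∞) ^ (-β) := sum_le_sum_of_subset (filter_subset _ _)

lemma le_ofReal_mul_rpow_of_mul_rpow_neg_le {a : ℝ≥0∞} {C r β : ℝ} (hr : 0 < r)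
    (h : a * ENNReal.ofReal r ^ (-β) ≤ ENNReal.ofReal C) :
    a ≤ ENNReal.ofReal (C * r ^ β) := by
  have hpos : ENNReal.ofReal r ^ β ≠ 0 := by simp [ENNReal.rpow_eq_zero_iff, hr]
  have hfin : ENNReal.ofReal r ^ β ≠ ⊤ := by simp [ENNReal.rpow_eq_top_iff, hr]
  rw [ENNReal.rpow_neg, ← div_eq_mul_inv, ENNReal.div_le_iff hpos hfin] at h
  rwa [ENNReal.ofReal_mul' (Real.rpow_nonneg hr.le _), ← ENNReal.ofReal_rpow_of_pos hr]

theorem empirical_morrey_of_bounded_discrete_riesz_potential_general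
    {d : ℕ} (β : ℝ) (hβ0 : 0 < β)
    (N : ℕ) (X : Fin N → Euc d) (C' : ℝ)
    (h : ∀ j : Fin N,
      (N : ℝ≥0∞)⁻¹ * ∑ i ∈ Finset.univ.erase j, (‖X i - X j‖₊ : ℝ≥0∞) ^ (-β) ≤
        ENNReal.ofReal C') :
    ∀ r : ℝ, 0 < r → ∀ i : Fin N,
      empMeasure X (Metric.ball (X i) r) ≤ ENNReal.ofReal (C' * r ^ β) + (N : ℝ≥0∞)⁻¹ := by
  intro r hr i
  have hneighbours : (N : ℝ≥0∞)⁻¹ * #{j ∈ univ.erase i | X j ∈ Metric.ball (X i) r} ≤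
      ENNReal.ofReal (C' * r ^ β) := by
    refine le_ofReal_mul_rpow_of_mul_rpow_neg_le hr (le_trans ?_ (h i))
    rw [mul_assoc]
    gcongr
    exact card_filter_mem_ball_mul_rpow_neg_le _ X (X i) hβ0.le
  calc empMeasure X (Metric.ball (X i) r)
      ≤ (N : ℝ≥0∞)⁻¹ * #{j ∈ univ.erase i | X j ∈ Metric.ball (X i) r} + (N : ℝ≥0∞)⁻¹ :=
        empMeasure_le_inv_mul_card_erase_add_inv X _ i
    _ ≤ ENNReal.ofReal (C' * r ^ β) + (N : ℝ≥0∞)⁻¹ := by gcongr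

/-- a configuration with bounded discrete Riesz potential of order `β` at every
particle is an empirical Morrey measure with exponent `β` and seminorm at most `C'`. -/
theorem empirical_morrey_of_bounded_discrete_riesz_potential
    {d : ℕ} (hd : 0 < d) (β : ℝ) (hβ0 : 0 < β) (hβd : β < d)
    (N : ℕ) (X : Fin N → Euc d) (C' : ℝ) (hC' : 0 < C')
    (h : ∀ j : Fin N,
      (N : ℝ≥0∞)⁻¹ * ∑ i ∈ Finset.univ.erase j, (‖X i - X j‖₊ : ℝ≥0∞) ^ (-β) ≤
        ENNReal.ofReal C') :
    ∀ r : ℝ, 0 < r → ∀ i : Fin N,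
      empMeasure X (Metric.ball (X i) r) ≤ ENNReal.ofReal (C' * r ^ β) + (N : ℝ≥0∞)⁻¹ :=
  empirical_morrey_of_bounded_discrete_riesz_potential_general β hβ0 N X C' h
end

section
/- Assume W : ℝ^d → ℝ ∪ {+∞} satisfies Hypotheses (H1), (H2) and (H3a). Then every minimiser X ∈ (ℝ^d)^N of the discrete interaction energy E_N satisfies |P_i(X) − 2E_N(X)| ≤ (W(0) − W_min)/N for all i ∈ {1,…,N}. -/
open MeasureTheory Filter Topology
open scoped ENNReal NNReal

/-! Moving particle `k` of a minimiser onto particle `l` cannot lower the energy. As `W` is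
symmetric, the energy changes by twice the change of the potential of `k`, whose new value is
`N P_l + W(0) - W(x_l - x_k) ≤ N P_l + W(0) - W_min`. Hence `P_k ≤ P_l + (W(0) - W_min)/N` for
all `k, l`, and averaging over `l`, resp. `k`, compares each `P_i` with the mean potential
`2 E_N`. -/

theorem EReal.coe_finsetSum {α : Type*} (s : Finset α) (f : α → ℝ) :
    ((∑ a ∈ s, f a : ℝ) : EReal) = ∑ a ∈ s, (f a : EReal) :=
  map_sum (⟨⟨Real.toEReal, EReal.coe_zero⟩, EReal.coe_add⟩ : ℝ →+ EReal) f s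

theorem EReal.exists_eq_coe_of_bounded {α : Type*} {f : α → EReal} {m C : ℝ}
    (hm : ∀ x, (m : EReal) ≤ f x) (hC : ∀ x, f x ≤ C) :
    ∃ g : α → ℝ, f = fun x => (g x : EReal) :=
  ⟨fun x => (f x).toReal, funext fun x =>
    (EReal.coe_toReal ((hC x).trans_lt (EReal.coe_lt_top C)).ne
      ((EReal.bot_lt_coe m).trans_le (hm x)).ne').symm⟩

namespace PairInteraction

open Finset Function

variable {ι E : Type*} [Fintype ι] [DecidableEq ι] [AddGroup E] (w : E → ℝ)

/- Unnormalised: for `N` particles, `potential w X k = N P_k(X)` and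
`total w X = 2 N² E_N(X)`. -/
def potential (X : ι → E) (k : ι) : ℝ :=
  ∑ j ∈ univ.erase k, w (X k - X j)

def total (X : ι → E) : ℝ :=
  ∑ k, potential w X k

variable {w}

theorem total_eq_two_mul_potential_add (hw : ∀ x, w (-x) = w x) (X : ι → E) (k : ι) :
    total w X = 2 * potential w X k +
      ∑ i ∈ univ.erase k, ∑ j ∈ (univ.erase i).erase k, w (X i - X j) := by
  have hsplit : ∀ i ∈ univ.erase k, potential w X i =
      w (X k - X i) + ∑ j ∈ (univ.erase i).erase k, w (X i - X j) := fun i hi => by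
    rw [potential, ← add_sum_erase _ _ (mem_erase.2 ⟨(ne_of_mem_erase hi).symm, mem_univ k⟩),
      ← hw, neg_sub]
  rw [total, ← add_sum_erase _ _ (mem_univ k), sum_congr rfl hsplit, sum_add_distrib]
  simp only [potential]
  ring

theorem potential_le_of_total_le_total_update (hw : ∀ x, w (-x) = w x) {X : ι → E} {k : ι}
    {y : E} (h : total w X ≤ total w (update X k y)) :
    potential w X k ≤ ∑ j ∈ univ.erase k, w (y - X j) := by
  have hrest : ∀ i ∈ univ.erase k, ∑ j ∈ (univ.erase i).erase k, w (update X k y i -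
      update X k y j) = ∑ j ∈ (univ.erase i).erase k, w (X i - X j) := fun i hi =>
    sum_congr rfl fun j hj => by
      rw [update_of_ne (ne_of_mem_erase hi), update_of_ne (ne_of_mem_erase hj)]
  have hpot : potential w (update X k y) k = ∑ j ∈ univ.erase k, w (y - X j) :=
    sum_congr rfl fun j hj => by rw [update_self, update_of_ne (ne_of_mem_erase hj)]
  rw [total_eq_two_mul_potential_add hw X k, total_eq_two_mul_potential_add hw _ k,
    sum_congr rfl hrest, hpot] at h
  linarith

theorem sum_erase_eq_potential_add_sub (X : ι → E) {k l : ι} (hkl : k ≠ l) :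
    ∑ j ∈ univ.erase k, w (X l - X j) = potential w X l + w 0 - w (X l - X k) := by
  have hk := add_sum_erase _ (fun j => w (X l - X j)) (mem_erase.2 ⟨hkl, mem_univ k⟩)
  have hl := add_sum_erase _ (fun j => w (X l - X j)) (mem_erase.2 ⟨hkl.symm, mem_univ l⟩)
  rw [erase_right_comm] at hl
  simp only [sub_self] at hl
  rw [potential]
  linarith

theorem potential_le_potential_add (hw : ∀ x, w (-x) = w x) {m : ℝ} (hm : ∀ x, m ≤ w x)
    {X : ι → E} (hX : ∀ k y, total w X ≤ total w (update X k y)) (k l : ι) :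
    potential w X k ≤ potential w X l + (w 0 - m) := by
  obtain rfl | hkl := eq_or_ne k l
  · linarith [hm 0]
  · have h := potential_le_of_total_le_total_update hw (hX k (X l))
    rw [sum_erase_eq_potential_add_sub X hkl] at h
    linarith [hm (X l - X k)]

theorem abs_card_mul_potential_sub_total_le (hw : ∀ x, w (-x) = w x) {m : ℝ}
    (hm : ∀ x, m ≤ w x) {X : ι → E} (hX : ∀ k y, total w X ≤ total w (update X k y))
    (i : ι) :
    |Fintype.card ι * potential w X i - total w X| ≤ Fintype.card ι * (w 0 - m) := by
  have hsum (f g : ι → ℝ) (hfg : ∀ k, f k ≤ g k + (w 0 - m)) :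
      ∑ k, f k ≤ ∑ k, g k + Fintype.card ι * (w 0 - m) := by
    calc ∑ k, f k ≤ ∑ k, (g k + (w 0 - m)) := sum_le_sum fun k _ => hfg k
      _ = ∑ k, g k + Fintype.card ι * (w 0 - m) := by
        rw [sum_add_distrib, sum_const, card_univ, nsmul_eq_mul]
  have h₁ := hsum _ _ fun l => potential_le_potential_add hw hm hX i l
  have h₂ := hsum _ _ fun k => potential_le_potential_add hw hm hX k i
  rw [sum_const, card_univ, nsmul_eq_mul] at h₁ h₂
  rw [abs_sub_le_iff, total]
  constructor <;> linarith

end PairInteraction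

open PairInteraction

theorem discEnergy_coe {d : ℕ} (w : Euc d → ℝ) (N : ℕ) (X : Fin N → Euc d) :
    discEnergy (fun x => (w x : EReal)) N X =
      ((1 / (2 * (N : ℝ) ^ 2) * total w X : ℝ) : EReal) := by
  simp only [discEnergy, total, potential, EReal.coe_mul, EReal.coe_finsetSum]

theorem particlePotential_coe {d : ℕ} (w : Euc d → ℝ) (N : ℕ) (X : Fin N → Euc d)
    (i : Fin N) :
    particlePotential (fun x => (w x : EReal)) N X i =
      (((N : ℝ)⁻¹ * potential w X i : ℝ) : EReal) := by
  simp only [particlePotential, potential, EReal.coe_mul, EReal.coe_finsetSum]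

theorem euler_lagrange_estimate_bounded_case_general
    {d : ℕ} (W : Euc d → EReal) (Wmin : ℝ) (Winf : EReal) (RW : ℝ)
    (h1 : Hyp1 W Wmin) (h2 : Hyp2 W Winf RW) (h3a : Hyp3a W)
    (N : ℕ) (X : Fin N → Euc d) (hX : IsDiscMinimiser W N X) :
    ∀ i : Fin N,
      particlePotential W N X i ≤
        ((2 : ℝ) : EReal) * discEnergy W N X +
          (((N : ℝ)⁻¹ : ℝ) : EReal) * (W 0 - (Wmin : EReal)) ∧
      ((2 : ℝ) : EReal) * discEnergy W N X ≤
        particlePotential W N X i +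
          (((N : ℝ)⁻¹ : ℝ) : EReal) * (W 0 - (Wmin : EReal)) := by
  intro i
  obtain ⟨-, hmin, -⟩ := h1
  obtain ⟨-, hsymm, -⟩ := h2
  obtain ⟨C, hC⟩ := h3a.1
  obtain ⟨w, rfl⟩ := EReal.exists_eq_coe_of_bounded hmin hC
  have hw : ∀ x, w (-x) = w x := fun x => EReal.coe_eq_coe_iff.1 (hsymm x)
  have hm : ∀ x, Wmin ≤ w x := fun x => EReal.coe_le_coe_iff.1 (hmin x)
  have hN : (0 : ℝ) < N := by exact_mod_cast i.pos
  have hmove : ∀ k y, total w X ≤ total w (Function.update X k y) := fun k y => by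
    have h := hX (Function.update X k y)
    rwa [discEnergy_coe, discEnergy_coe, EReal.coe_le_coe_iff,
      mul_le_mul_iff_of_pos_left (by positivity)] at h
  obtain ⟨h₁, h₂⟩ := abs_sub_le_iff.1 (abs_card_mul_potential_sub_total_le hw hm hmove i)
  rw [Fintype.card_fin] at h₁ h₂
  simp only [particlePotential_coe, discEnergy_coe, ← EReal.coe_sub, ← EReal.coe_mul,
    ← EReal.coe_add, EReal.coe_le_coe_iff]
  constructor
  · field_simp
    linarith
  · field_simp
    linarith

/-- Euler–Lagrange estimate under (H3a):
`|P_i(X) − 2E_N(X)| ≤ (W(0) − Wmin)/N` for a discrete minimiser `X`, stated as two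
one-sided inequalities in the extended reals. -/
theorem euler_lagrange_estimate_bounded_case
    {d : ℕ} (hd : 0 < d) (W : Euc d → EReal) (Wmin : ℝ) (Winf : EReal) (RW : ℝ)
    (h1 : Hyp1 W Wmin) (h2 : Hyp2 W Winf RW) (h3a : Hyp3a W)
    (N : ℕ) (hN : 2 ≤ N) (X : Fin N → Euc d) (hX : IsDiscMinimiser W N X) :
    ∀ i : Fin N,
      particlePotential W N X i ≤
        ((2 : ℝ) : EReal) * discEnergy W N X +
          (((N : ℝ)⁻¹ : ℝ) : EReal) * (W 0 - (Wmin : EReal)) ∧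
      ((2 : ℝ) : EReal) * discEnergy W N X ≤
        particlePotential W N X i +
          (((N : ℝ)⁻¹ : ℝ) : EReal) * (W 0 - (Wmin : EReal)) :=
  euler_lagrange_estimate_bounded_case_general W Wmin Winf RW h1 h2 h3a N X hX
end

section
/- Assume W : ℝ^d → ℝ ∪ {+∞} satisfies Hypotheses (H1), (H2) and (H3a)-or-(H3b). Let ρ be a Borel probability measure on ℝ^d and let (X_N)_{N≥2} be any sequence with X_N ∈ (ℝ^d)^N whose empirical measures μ_{X_N} converge narrowly to ρ as N → ∞. Then E(ρ) ≤ liminf_{N→∞} E_N(X_N). -/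
open MeasureTheory Filter Topology
open scoped ENNReal NNReal

/-! Approximate `W` from below by an increasing sequence of bounded Lipschitz functions `φ_k`
(the `k`-Lipschitz envelopes of its truncations at height `k`; this is where lower
semicontinuity and the lower bound enter). For a fixed `φ_k`,
`E_N(X_N) ≥ ½ ∬ φ_k(x - y) dμ_N dμ_N - φ_k(0) / (2N)`, and the right-hand side tends to
`½ ∬ φ_k(x - y) dρ dρ` because `μ_N ⊗ μ_N → ρ ⊗ ρ` narrowly. Monotone convergence in `k`
then gives `E(ρ) ≤ liminf E_N(X_N)`. -/

open BoundedContinuousFunction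

section ExtendedIntegral

variable {α : Type*} [MeasurableSpace α] {μ : Measure α}

lemma eintegral_coe {φ : α → ℝ} (hφ : Integrable φ μ) :
    eintegral μ (fun x => (φ x : EReal)) = ∫ x, φ x ∂μ := by
  have hpos : ∫⁻ x, ENNReal.ofReal (φ x) ∂μ ≠ ⊤ := hφ.lintegral_lt_top.ne
  have hneg : ∫⁻ x, ENNReal.ofReal (-φ x) ∂μ ≠ ⊤ := hφ.neg.lintegral_lt_top.ne
  rw [integral_eq_lintegral_pos_part_sub_lintegral_neg_part hφ, EReal.coe_sub,
    EReal.coe_ennreal_toReal hpos, EReal.coe_ennreal_toReal hneg]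
  rfl

lemma tendsto_integral_eintegral_of_monotone [IsFiniteMeasure μ] {φ : ℕ → α → ℝ}
    {f : α → EReal} {b : ℝ} (hint : ∀ k, Integrable (φ k) μ)
    (hmono : ∀ x, Monotone fun k => φ k x) (hb : ∀ k x, b ≤ φ k x)
    (hf : ∀ x, Tendsto (fun k => (φ k x : EReal)) atTop (𝓝 (f x))) :
    Tendsto (fun k => ((∫ x, φ k x ∂μ : ℝ) : EReal)) atTop (𝓝 (eintegral μ f)) := by
  have hneg_pt : ∀ x, Tendsto (fun k => ENNReal.ofReal (-φ k x)) atTop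
      (𝓝 (erealToENNReal (-f x))) := fun x =>
    ((EReal.continuous_toENNReal.comp continuous_neg).tendsto _).comp (hf x)
  have hconst : ∫⁻ _, ENNReal.ofReal (-b) ∂μ ≠ ⊤ := by simp [ENNReal.mul_ne_top]
  have hpos : Tendsto (fun k => ∫⁻ x, ENNReal.ofReal (φ k x) ∂μ) atTop
      (𝓝 (∫⁻ x, erealToENNReal (f x) ∂μ)) :=
    lintegral_tendsto_of_tendsto_of_monotone (fun k => (hint k).aemeasurable.ennreal_ofReal)
      (ae_of_all _ fun x _ _ hkl => ENNReal.ofReal_le_ofReal (hmono x hkl))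
      (ae_of_all _ fun x => (EReal.continuous_toENNReal.tendsto _).comp (hf x))
  have hneg : Tendsto (fun k => ∫⁻ x, ENNReal.ofReal (-φ k x) ∂μ) atTop
      (𝓝 (∫⁻ x, erealToENNReal (-f x) ∂μ)) :=
    tendsto_lintegral_of_dominated_convergence' _
      (fun k => (hint k).neg.aemeasurable.ennreal_ofReal)
      (fun k => ae_of_all _ fun x => ENNReal.ofReal_le_ofReal (neg_le_neg (hb k x)))
      hconst (ae_of_all _ hneg_pt)
  have hneg_ne_top : ∫⁻ x, erealToENNReal (-f x) ∂μ ≠ ⊤ :=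
    ne_top_of_le_ne_top hconst (lintegral_mono fun x => le_of_tendsto' (hneg_pt x) fun k =>
      ENNReal.ofReal_le_ofReal (neg_le_neg (hb k x)))
  have hsub := (EReal.continuousAt_add (Or.inr (by simpa using hneg_ne_top))
    (Or.inl (by simp))).tendsto.comp
    (((continuous_coe_ennreal_ereal.tendsto _).comp hpos).prodMk_nhds
      ((continuous_neg.tendsto _).comp ((continuous_coe_ennreal_ereal.tendsto _).comp hneg)))
  refine hsub.congr fun k => ?_
  rw [← eintegral_coe (hint k)]
  rfl

end ExtendedIntegral

section LipschitzEnvelope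

variable {α : Type*} [PseudoMetricSpace α]

/-- The largest `k`-Lipschitz function below `g` (for `g` bounded below and `0 ≤ k`). -/
noncomputable def lipschitzEnvelope (g : α → ℝ) (k : ℝ) (x : α) : ℝ :=
  ⨅ y, g y + k * dist x y

variable {g g' : α → ℝ} {b k k' : ℝ}

lemma bddBelow_range_add_mul_dist (hb : ∀ y, b ≤ g y) (hk : 0 ≤ k) (x : α) :
    BddBelow (Set.range fun y => g y + k * dist x y) :=
  ⟨b, by rintro _ ⟨y, rfl⟩; nlinarith [hb y, dist_nonneg (x := x) (y := y)]⟩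

lemma le_lipschitzEnvelope (hb : ∀ y, b ≤ g y) (hk : 0 ≤ k) (x : α) :
    b ≤ lipschitzEnvelope g k x :=
  have : Nonempty α := ⟨x⟩
  le_ciInf fun y => by nlinarith [hb y, dist_nonneg (x := x) (y := y)]

lemma lipschitzEnvelope_le (hb : ∀ y, b ≤ g y) (hk : 0 ≤ k) (x : α) :
    lipschitzEnvelope g k x ≤ g x :=
  (ciInf_le (bddBelow_range_add_mul_dist hb hk x) x).trans_eq (by simp)

lemma lipschitzEnvelope_mono (hb : ∀ y, b ≤ g y) (hk : 0 ≤ k) (hg : g ≤ g') (hkk' : k ≤ k')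
    (x : α) : lipschitzEnvelope g k x ≤ lipschitzEnvelope g' k' x :=
  ciInf_mono (bddBelow_range_add_mul_dist hb hk x) fun y =>
    add_le_add (hg y) (mul_le_mul_of_nonneg_right hkk' dist_nonneg)

lemma lipschitzWith_lipschitzEnvelope (hb : ∀ y, b ≤ g y) (k : ℝ≥0) :
    LipschitzWith k (lipschitzEnvelope g k) := by
  refine LipschitzWith.of_le_add_mul k fun x x' => ?_
  have : Nonempty α := ⟨x⟩
  suffices lipschitzEnvelope g k x - k * dist x x' ≤ lipschitzEnvelope g k x' by linarith
  refine le_ciInf fun y => ?_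
  have : lipschitzEnvelope g k x ≤ g y + k * dist x y :=
    ciInf_le (bddBelow_range_add_mul_dist hb k.2 x) y
  nlinarith [dist_triangle x x' y, k.2]

lemma continuous_lipschitzEnvelope (hb : ∀ y, b ≤ g y) (hk : 0 ≤ k) :
    Continuous (lipschitzEnvelope g k) := by
  lift k to ℝ≥0 using hk
  exact (lipschitzWith_lipschitzEnvelope hb k).continuous

lemma tendsto_lipschitzEnvelope (hb : ∀ y, b ≤ g y) {x : α} (hg : LowerSemicontinuousAt g x) :
    Tendsto (fun n : ℕ => lipschitzEnvelope g n x) atTop (𝓝 (g x)) := by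
  refine tendsto_order.2 ⟨fun s hs => ?_, fun s hs => Eventually.of_forall fun n =>
    (lipschitzEnvelope_le hb n.cast_nonneg x).trans_lt hs⟩
  obtain ⟨t, hst, htg⟩ := exists_between hs
  obtain ⟨δ, hδ, hball⟩ := Metric.eventually_nhds_iff.1 (hg t htg)
  obtain ⟨m, hm⟩ := exists_nat_ge ((t - b) / δ)
  rw [div_le_iff₀ hδ] at hm
  filter_upwards [eventually_ge_atTop m] with n hn
  have : Nonempty α := ⟨x⟩
  refine hst.trans_le (le_ciInf fun y => ?_)
  have hn' : (m : ℝ) ≤ n := Nat.cast_le.2 hn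
  rcases lt_or_ge (dist y x) δ with hy | hy
  · nlinarith [hball hy, dist_nonneg (x := x) (y := y), n.cast_nonneg (α := ℝ)]
  · rw [dist_comm] at hy
    nlinarith [hb y, m.cast_nonneg (α := ℝ)]

end LipschitzEnvelope

section Truncation

variable {α : Type*}

noncomputable def truncateAbove (f : α → EReal) (k : ℝ) (y : α) : ℝ :=
  (min (f y) k).toReal

variable {f : α → EReal} {B : ℝ}

lemma coe_truncateAbove (hB : ∀ x, (B : EReal) ≤ f x) (k : ℝ) (y : α) :
    (truncateAbove f k y : EReal) = min (f y) k :=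
  EReal.coe_toReal ((min_le_right _ _).trans_lt (EReal.coe_lt_top k)).ne
    (lt_min ((EReal.bot_lt_coe B).trans_le (hB y)) (EReal.bot_lt_coe k)).ne'

lemma min_le_truncateAbove (hB : ∀ x, (B : EReal) ≤ f x) {k : ℝ} (hk : 0 ≤ k) (y : α) :
    min B 0 ≤ truncateAbove f k y := by
  rw [← EReal.coe_le_coe_iff, coe_truncateAbove hB]
  exact le_min ((EReal.coe_le_coe_iff.2 (min_le_left _ _)).trans (hB y))
    (EReal.coe_le_coe_iff.2 ((min_le_right _ _).trans hk))

lemma truncateAbove_le (hB : ∀ x, (B : EReal) ≤ f x) (k : ℝ) (y : α) :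
    truncateAbove f k y ≤ k := by
  rw [← EReal.coe_le_coe_iff, coe_truncateAbove hB]
  exact min_le_right _ _

lemma coe_truncateAbove_le (hB : ∀ x, (B : EReal) ≤ f x) (k : ℝ) (y : α) :
    (truncateAbove f k y : EReal) ≤ f y :=
  (coe_truncateAbove hB k y).trans_le (min_le_left _ _)

lemma truncateAbove_mono (hB : ∀ x, (B : EReal) ≤ f x) : Monotone (truncateAbove f) :=
  fun k l hkl y => by
    rw [← EReal.coe_le_coe_iff, coe_truncateAbove hB, coe_truncateAbove hB]
    exact min_le_min_left _ (EReal.coe_le_coe_iff.2 hkl)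

lemma lowerSemicontinuous_truncateAbove [TopologicalSpace α] (hf : LowerSemicontinuous f)
    (hB : ∀ x, (B : EReal) ≤ f x) (k : ℝ) : LowerSemicontinuous (truncateAbove f k) := by
  intro x s (hs : s < truncateAbove f k x)
  show ∀ᶠ y in 𝓝 x, s < truncateAbove f k y
  rw [← EReal.coe_lt_coe_iff, coe_truncateAbove hB, lt_min_iff] at hs
  filter_upwards [hf x _ hs.1] with y hy
  rw [← EReal.coe_lt_coe_iff, coe_truncateAbove hB]
  exact lt_min hy hs.2

end Truncation

section Approximation

variable {α : Type*} [PseudoMetricSpace α] {f : α → EReal} {B : ℝ}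

lemma tendsto_lipschitzEnvelope_truncateAbove (hf : LowerSemicontinuous f)
    (hB : ∀ x, (B : EReal) ≤ f x) (x : α) :
    Tendsto (fun n : ℕ => (lipschitzEnvelope (truncateAbove f n) n x : EReal)) atTop
      (𝓝 (f x)) := by
  have hlower := fun (n : ℕ) => min_le_truncateAbove hB n.cast_nonneg
  refine tendsto_order.2 ⟨fun a ha => ?_, fun a ha => Eventually.of_forall fun n =>
    (EReal.coe_le_coe_iff.2 (lipschitzEnvelope_le (hlower n) n.cast_nonneg x)).trans_lt
      ((coe_truncateAbove_le hB _ x).trans_lt ha)⟩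
  obtain ⟨s, has, hsf⟩ := EReal.lt_iff_exists_real_btwn.1 ha
  obtain ⟨k, hk⟩ := exists_nat_gt s
  have hs_lt : s < truncateAbove f k x := by
    rw [← EReal.coe_lt_coe_iff, coe_truncateAbove hB]
    exact lt_min hsf (EReal.coe_lt_coe_iff.2 hk)
  have hk_lim := tendsto_lipschitzEnvelope (hlower k)
    ((lowerSemicontinuous_truncateAbove hf hB k).lowerSemicontinuousAt x)
  -- Past `k`, the `n`-th envelope dominates the envelope of the fixed truncation at height `k`.
  filter_upwards [hk_lim.eventually_const_lt hs_lt, eventually_ge_atTop k] with n hn hkn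
  refine has.trans (EReal.coe_lt_coe_iff.2 (hn.trans_le ?_))
  exact lipschitzEnvelope_mono (hlower k) n.cast_nonneg
    (truncateAbove_mono hB (Nat.cast_le.2 hkn)) le_rfl x

theorem LowerSemicontinuous.exists_monotone_tendsto (hf : LowerSemicontinuous f)
    (hB : ∀ x, (B : EReal) ≤ f x) :
    ∃ φ : ℕ → α →ᵇ ℝ, Monotone φ ∧ (∀ k x, (φ k x : EReal) ≤ f x) ∧
      ∀ x, Tendsto (fun k => (φ k x : EReal)) atTop (𝓝 (f x)) := by
  have hlower := fun (n : ℕ) => min_le_truncateAbove hB n.cast_nonneg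
  have hbounds : ∀ (n : ℕ) x, min B 0 ≤ lipschitzEnvelope (truncateAbove f n) n x ∧
      lipschitzEnvelope (truncateAbove f n) n x ≤ n := fun n x =>
    ⟨le_lipschitzEnvelope (hlower n) n.cast_nonneg x,
      (lipschitzEnvelope_le (hlower n) n.cast_nonneg x).trans (truncateAbove_le hB n x)⟩
  refine ⟨fun n => BoundedContinuousFunction.ofNormedAddCommGroup _
    (continuous_lipschitzEnvelope (hlower n) n.cast_nonneg) (|min B 0| + n) fun x => ?_,
    fun k l hkl x => ?_, fun n x => ?_, tendsto_lipschitzEnvelope_truncateAbove hf hB⟩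
  · rw [Real.norm_eq_abs, abs_le]
    constructor <;> linarith [neg_abs_le (min B 0), abs_nonneg (min B 0), hbounds n x]
  · exact lipschitzEnvelope_mono (hlower k) k.cast_nonneg
      (truncateAbove_mono hB (Nat.cast_le.2 hkl)) (Nat.cast_le.2 hkl) x
  · exact (EReal.coe_le_coe_iff.2 (lipschitzEnvelope_le (hlower n) n.cast_nonneg x)).trans
      (coe_truncateAbove_le hB n x)

end Approximation

lemma EReal.coe_finset_sum {ι : Type*} (s : Finset ι) (f : ι → ℝ) :
    ((∑ i ∈ s, f i : ℝ) : EReal) = ∑ i ∈ s, (f i : EReal) :=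
  map_sum (⟨⟨(↑), EReal.coe_zero⟩, EReal.coe_add⟩ : ℝ →+ EReal) f s

def BoundedContinuousFunction.compSub {E : Type*} [TopologicalSpace E] [AddGroup E]
    [ContinuousSub E] (φ : E →ᵇ ℝ) : E × E →ᵇ ℝ :=
  φ.compContinuous ⟨fun z => z.1 - z.2, continuous_sub⟩

@[simp]
lemma BoundedContinuousFunction.compSub_apply {E : Type*} [TopologicalSpace E] [AddGroup E]
    [ContinuousSub E] (φ : E →ᵇ ℝ) (z : E × E) : φ.compSub z = φ (z.1 - z.2) := rfl

section EmpiricalMeasure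

variable {d N : ℕ}

instance (X : Fin N → Euc d) : IsFiniteMeasure (empMeasure X) := by
  constructor
  rcases eq_or_ne N 0 with rfl | hN
  · simp [empMeasure]
  · simp [empMeasure, ENNReal.inv_mul_cancel (Nat.cast_ne_zero.2 hN) (ENNReal.natCast_ne_top N)]

instance [NeZero N] (X : Fin N → Euc d) : IsProbabilityMeasure (empMeasure X) := by
  constructor
  simp [empMeasure, ENNReal.inv_mul_cancel (NeZero.ne (N : ℝ≥0∞)) (ENNReal.natCast_ne_top N)]

lemma integral_empMeasure (X : Fin N → Euc d) (f : Euc d → ℝ) :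
    ∫ x, f x ∂(empMeasure X) = (N : ℝ)⁻¹ * ∑ i, f (X i) := by
  rw [empMeasure, integral_smul_measure,
    integral_finsetSum_measure fun i _ => integrable_dirac enorm_lt_top]
  simp

lemma integral_empMeasure_prod (X : Fin N → Euc d) (g : Euc d × Euc d →ᵇ ℝ) :
    ∫ z, g z ∂((empMeasure X).prod (empMeasure X)) =
      ((N : ℝ) ^ 2)⁻¹ * ∑ i, ∑ j, g (X i, X j) := by
  rw [integral_prod _ (g.integrable _)]
  simp only [integral_empMeasure, Finset.mul_sum]
  ring_nf

end EmpiricalMeasure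

section DiscreteEnergy

variable {d N : ℕ}

lemma sum_sum_erase_eq_sub (X : Fin N → Euc d) (φ : Euc d → ℝ) :
    ∑ i, ∑ j ∈ Finset.univ.erase i, φ (X i - X j) = ∑ i, ∑ j, φ (X i - X j) - N * φ 0 := by
  simp [Finset.sum_erase_eq_sub, Finset.sum_sub_distrib]

/-- The diagonal `i = j`, charged by the product measure but absent from `E_N`, accounts for
the term `φ 0 / (2 N)`. -/
lemma coe_integral_sub_le_discEnergy {W : Euc d → EReal} {φ : Euc d →ᵇ ℝ}
    (hφW : ∀ x, (φ x : EReal) ≤ W x) (X : Fin N → Euc d) :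
    ((1 / 2 * ∫ z, φ.compSub z ∂((empMeasure X).prod (empMeasure X)) - φ 0 / (2 * N) : ℝ) :
      EReal) ≤ discEnergy W N X := by
  have hreal : 1 / 2 * ∫ z, φ.compSub z ∂((empMeasure X).prod (empMeasure X)) - φ 0 / (2 * N) =
      1 / (2 * (N : ℝ) ^ 2) * ∑ i, ∑ j ∈ Finset.univ.erase i, φ (X i - X j) := by
    rw [integral_empMeasure_prod, sum_sum_erase_eq_sub]
    rcases eq_or_ne (N : ℝ) 0 with hN | hN
    · simp [hN]
    · simp only [BoundedContinuousFunction.compSub_apply]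
      field_simp
  rw [hreal, EReal.coe_mul, discEnergy]
  refine mul_le_mul_of_nonneg_left ?_ (EReal.coe_nonneg.2 (by positivity))
  rw [EReal.coe_finset_sum]
  exact Finset.sum_le_sum fun i _ => (EReal.coe_finset_sum _ _).trans_le
    (Finset.sum_le_sum fun j _ => hφW _)

end DiscreteEnergy

lemma tendsto_integral_prod_of_tendsto_integral {α ι : Type*} [TopologicalSpace α]
    [SecondCountableTopology α] [TopologicalSpace.PseudoMetrizableSpace α] [MeasurableSpace α]
    [OpensMeasurableSpace α] {l : Filter ι} {μ : ι → Measure α}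
    [∀ i, IsProbabilityMeasure (μ i)] {ν : Measure α} [IsProbabilityMeasure ν]
    (h : ∀ f : α →ᵇ ℝ, Tendsto (fun i => ∫ x, f x ∂μ i) l (𝓝 (∫ x, f x ∂ν)))
    (g : α × α →ᵇ ℝ) :
    Tendsto (fun i => ∫ z, g z ∂((μ i).prod (μ i))) l (𝓝 (∫ z, g z ∂(ν.prod ν))) := by
  let P : ι → ProbabilityMeasure α := fun i => ⟨μ i, inferInstance⟩
  have hP : Tendsto P l (𝓝 ⟨ν, inferInstance⟩) :=
    ProbabilityMeasure.tendsto_iff_forall_integral_tendsto.2 h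
  exact ProbabilityMeasure.tendsto_iff_forall_integral_tendsto.1
    ((ProbabilityMeasure.continuous_prod.tendsto _).comp (hP.prodMk_nhds hP)) g

lemma coe_half_integral_le_liminf_discEnergy {d : ℕ} {W : Euc d → EReal}
    {ρ : Measure (Euc d)} [IsProbabilityMeasure ρ] {X : (N : ℕ) → Fin N → Euc d}
    (hconv : NarrowTendsto (fun N => empMeasure (X N)) ρ) {φ : Euc d →ᵇ ℝ}
    (hφW : ∀ x, (φ x : EReal) ≤ W x) :
    ((1 / 2 * ∫ z, φ.compSub z ∂(ρ.prod ρ) : ℝ) : EReal) ≤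
      liminf (fun N => discEnergy W N (X N)) atTop := by
  have hprod : Tendsto (fun N => ∫ z, φ.compSub z ∂((empMeasure (X N)).prod (empMeasure (X N))))
      atTop (𝓝 (∫ z, φ.compSub z ∂(ρ.prod ρ))) := by
    rw [← tendsto_add_atTop_iff_nat 1]
    exact tendsto_integral_prod_of_tendsto_integral
      (fun f => (tendsto_add_atTop_iff_nat 1).2 (hconv f)) _
  have hself : Tendsto (fun N : ℕ => φ 0 / (2 * N)) atTop (𝓝 0) := by
    simpa only [div_div] using tendsto_const_div_atTop_nhds_zero_nat (φ 0 / 2)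
  have hlim := (continuous_coe_real_ereal.tendsto _).comp
    ((hprod.const_mul (1 / 2)).sub hself)
  rw [sub_zero] at hlim
  rw [← hlim.liminf_eq]
  exact liminf_le_liminf (Eventually.of_forall fun N => coe_integral_sub_le_discEnergy hφW (X N))

theorem liminf_inequality_for_discrete_energy_general
    {d : ℕ} (W : Euc d → EReal) (Wmin : ℝ)
    (h1 : Hyp1 W Wmin)
    (ρ : Measure (Euc d)) (hρ : IsProbabilityMeasure ρ)
    (X : (N : ℕ) → Fin N → Euc d)
    (hconv : NarrowTendsto (fun N => empMeasure (X N)) ρ) :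
    contEnergy W ρ ≤ Filter.liminf (fun N => discEnergy W N (X N)) atTop := by
  obtain ⟨hlsc, hWmin, -⟩ := h1
  obtain ⟨φ, hmono, hφW, hφ⟩ := hlsc.exists_monotone_tendsto hWmin
  have hlower : ∀ k x, -‖φ 0‖ ≤ φ k x := fun k x =>
    (neg_le_of_abs_le ((φ 0).norm_coe_le_norm x)).trans (hmono k.zero_le x)
  have hint := tendsto_integral_eintegral_of_monotone (μ := ρ.prod ρ)
    (fun k => (φ k).compSub.integrable _) (fun z k l hkl => hmono hkl _)
    (fun k z => hlower k _) (f := fun z => W (z.1 - z.2)) (fun z => hφ _)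
  refine le_of_tendsto' (EReal.Tendsto.const_mul hint (Or.inl (EReal.coe_ne_bot (1 / 2)))
    (Or.inl (EReal.coe_ne_top _))) fun k => ?_
  rw [← EReal.coe_mul]
  exact coe_half_integral_le_liminf_discEnergy hconv (hφW k)

/-- liminf inequality: if the empirical measures of `X_N` converge narrowly to
`ρ`, then `E(ρ) ≤ liminf_N E_N(X_N)`. -/
theorem liminf_inequality_for_discrete_energy
    {d : ℕ} (hd : 0 < d) (W : Euc d → EReal) (Wmin : ℝ) (Winf : EReal) (RW : ℝ)
    (h1 : Hyp1 W Wmin) (h2 : Hyp2 W Winf RW)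
    (h3 : Hyp3a W ∨ ∃ β C_W : ℝ, Hyp3b W β C_W)
    (ρ : Measure (Euc d)) (hρ : IsProbabilityMeasure ρ)
    (X : (N : ℕ) → Fin N → Euc d)
    (hconv : NarrowTendsto (fun N => empMeasure (X N)) ρ) :
    contEnergy W ρ ≤ Filter.liminf (fun N => discEnergy W N (X N)) atTop :=
  liminf_inequality_for_discrete_energy_general W Wmin h1 ρ hρ X hconv
end

section
/- Let p ∈ [1,∞] with Hölder dual q, and let (X_N)_{N≥2} be a sequence of configurations X_N ∈ (ℝ^d)^N whose empirical measures μ_{X_N} converge narrowly to a Borel probability measure ρ on ℝ^d. Suppose there exists M > 0 such that every X_N is an empirical p-Morrey measure with [X_N]_{M_p^N} ≤ M. Then ρ belongs to the Morrey space M_p(ℝ^d) and ‖ρ‖_{M_p(ℝ^d)} ≤ 2^{d/q} M. -/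
open MeasureTheory Filter Topology
open scoped ENNReal NNReal

/-- Morrey regularity passes to narrow limits: if the empirical measures of a
sequence of uniformly `p`-Morrey configurations converge narrowly to `ρ`, then `ρ` is
`p`-Morrey with norm at most `2^{d/q} M`. -/
theorem morrey_regularity_of_narrow_limit
    {d : ℕ} (hd : 0 < d) (p : ℝ≥0∞) (hp : 1 ≤ p)
    (X : (N : ℕ) → Fin N → Euc d) (ρ : Measure (Euc d)) (hρ : IsProbabilityMeasure ρ)
    (hconv : NarrowTendsto (fun N => empMeasure (X N)) ρ) (M : ℝ) (hM : 0 < M)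
    (hmorrey : ∀ N : ℕ, 2 ≤ N → ∀ r : ℝ, 0 < r → ∀ i : Fin N,
      empMeasure (X N) (Metric.ball (X N i) r) ≤
        ENNReal.ofReal (M * r ^ morreyExp d p) + (N : ℝ≥0∞)⁻¹) :
    ∀ r : ℝ, 0 < r → ∀ x : Euc d,
      ρ (Metric.ball x r) ≤
        ENNReal.ofReal ((2 : ℝ) ^ morreyExp d p * M * r ^ morreyExp d p) := by
  intro r hr x
  set α : ℝ := morreyExp d p with hα_def
  -- probability measure structure on the empirical measures (N ≥ 1)
  have hprob : ∀ N : ℕ, 1 ≤ N → IsProbabilityMeasure (empMeasure (X N)) := by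
    intro N hN
    constructor
    have hNne : ((N : ℝ≥0∞)) ≠ 0 := by
      simp only [ne_eq, Nat.cast_eq_zero]; omega
    simp [empMeasure, Measure.smul_apply, Measure.finset_sum_apply,
      ENNReal.inv_mul_cancel hNne (ENNReal.natCast_ne_top N)]
  -- shifted sequence of probability measures
  let μs : ℕ → ProbabilityMeasure (Euc d) :=
    fun n => ⟨empMeasure (X (n + 2)), hprob (n + 2) (by omega)⟩
  let ρ' : ProbabilityMeasure (Euc d) := ⟨ρ, hρ⟩
  have htend : Tendsto μs atTop (𝓝 ρ') := by
    rw [MeasureTheory.ProbabilityMeasure.tendsto_iff_forall_integral_tendsto]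
    intro f
    exact (hconv f).comp (tendsto_add_atTop_nat 2)
  -- portmanteau: open set liminf bound
  have hliminf : ρ (Metric.ball x r) ≤
      atTop.liminf fun n => (μs n : Measure (Euc d)) (Metric.ball x r) :=
    MeasureTheory.ProbabilityMeasure.le_liminf_measure_open_of_tendsto htend
      Metric.isOpen_ball
  -- per-N bound using the uniform Morrey estimate with doubled radius
  have hbound : ∀ n : ℕ, (μs n : Measure (Euc d)) (Metric.ball x r) ≤
      ENNReal.ofReal (M * (2 * r) ^ α) + ((n + 2 : ℕ) : ℝ≥0∞)⁻¹ := by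
    intro n
    by_cases hex : ∃ i : Fin (n + 2), X (n + 2) i ∈ Metric.ball x r
    · obtain ⟨i, hi⟩ := hex
      have hsub : Metric.ball x r ⊆ Metric.ball (X (n + 2) i) (2 * r) := by
        intro y hy
        simp only [Metric.mem_ball] at hy hi ⊢
        have : dist y (X (n + 2) i) ≤ dist y x + dist x (X (n + 2) i) := dist_triangle _ _ _
        rw [dist_comm x (X (n + 2) i)] at this
        linarith
      calc (μs n : Measure (Euc d)) (Metric.ball x r)
          ≤ (μs n : Measure (Euc d)) (Metric.ball (X (n + 2) i) (2 * r)) :=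
            measure_mono hsub
        _ ≤ ENNReal.ofReal (M * (2 * r) ^ α) + ((n + 2 : ℕ) : ℝ≥0∞)⁻¹ :=
            hmorrey (n + 2) (by omega) (2 * r) (by linarith) i
    · push_neg at hex
      have hzero : (μs n : Measure (Euc d)) (Metric.ball x r) = 0 := by
        show empMeasure (X (n + 2)) (Metric.ball x r) = 0
        simp only [empMeasure, Measure.smul_apply, Measure.finset_sum_apply]
        have : ∀ i : Fin (n + 2),
            Measure.dirac (X (n + 2) i) (Metric.ball x r) = 0 := by
          intro i
          rw [Measure.dirac_apply' _ Metric.isOpen_ball.measurableSet]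
          exact Set.indicator_of_notMem (hex i) _
        simp [this]
      simp [hzero]
  -- the bound sequence tends to the constant
  have htends : Tendsto (fun n : ℕ => ENNReal.ofReal (M * (2 * r) ^ α)
      + ((n + 2 : ℕ) : ℝ≥0∞)⁻¹) atTop (𝓝 (ENNReal.ofReal (M * (2 * r) ^ α))) := by
    have h0 : Tendsto (fun n : ℕ => ((n + 2 : ℕ) : ℝ≥0∞)⁻¹) atTop (𝓝 0) :=
      ENNReal.tendsto_inv_nat_nhds_zero.comp (tendsto_add_atTop_nat 2)
    simpa using (tendsto_const_nhds.add h0)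
  have hliminf2 : (atTop.liminf fun n => (μs n : Measure (Euc d)) (Metric.ball x r))
      ≤ ENNReal.ofReal (M * (2 * r) ^ α) := by
    calc (atTop.liminf fun n => (μs n : Measure (Euc d)) (Metric.ball x r))
        ≤ atTop.liminf fun n : ℕ => ENNReal.ofReal (M * (2 * r) ^ α)
            + ((n + 2 : ℕ) : ℝ≥0∞)⁻¹ :=
          Filter.liminf_le_liminf (Filter.Eventually.of_forall hbound)
      _ = ENNReal.ofReal (M * (2 * r) ^ α) := htends.liminf_eq
  -- rewrite the constant
  have hrw : M * (2 * r) ^ α = (2 : ℝ) ^ α * M * r ^ α := by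
    rw [Real.mul_rpow (by norm_num) hr.le]; ring
  calc ρ (Metric.ball x r) ≤ _ := hliminf
    _ ≤ ENNReal.ofReal (M * (2 * r) ^ α) := hliminf2
    _ = ENNReal.ofReal ((2 : ℝ) ^ α * M * r ^ α) := by rw [hrw]
end
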